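/- arXiv:1907.09588 — 3 statements merged into one kernel-verified Lean document; each statement's English description precedes it below -/
import Mathlib

section
/- For any symmetric non-negative matrices A ∈ ℝ^{n×n} and B ∈ ℝ^{k×k}, and any matrices S, S' ∈ ℝ^{n×k} with non-negative entries and S' having strictly positive entries, we have ∑_{i,p} (A S' B)_{ip} S_{ip}² / S'_{ip} ≥ tr(Sᵀ A S B). -/
open Matrix BigOperators

theorem stmt0 {n k : ℕ} (A : Matrix (Fin n) (Fin n) ℝ) (B : Matrix (Fin k) (Fin k) ℝ)
    (S S' : Matrix (Fin n) (Fin k) ℝ)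
    (hAsym : A.IsSymm) (hAnn : ∀ i j, 0 ≤ A i j)
    (hBsym : B.IsSymm) (hBnn : ∀ i j, 0 ≤ B i j)
    (hSnn : ∀ i p, 0 ≤ S i p) (hS'pos : ∀ i p, 0 < S' i p) :
    Matrix.trace (Sᵀ * A * S * B) ≤ ∑ i, ∑ p, (A * S' * B) i p * (S i p) ^ 2 / S' i p := by
  have hA : ∀ i j, A j i = A i j := fun i j => hAsym.apply i j
  have hB : ∀ i j, B j i = B i j := fun i j => hBsym.apply i j
  -- entrywise expansion of A * T * B
  have hASB : ∀ (T : Matrix (Fin n) (Fin k) ℝ) (i : Fin n) (p : Fin k),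
      (A * T * B) i p = ∑ j, ∑ q, A i j * T j q * B q p := by
    intro T i p
    simp only [Matrix.mul_apply, Finset.sum_mul]
    rw [Finset.sum_comm]
  -- the key scalar inequality
  have key : ∀ (c d a b s t : ℝ), 0 ≤ c → 0 ≤ d → 0 ≤ a → 0 ≤ b → 0 < s → 0 < t →
      2 * (c * b * d * a) ≤ c * t * d * a ^ 2 / s + c * s * d * b ^ 2 / t := by
    intro c d a b s t hc hd ha hb hs ht
    rw [div_add_div _ _ (ne_of_gt hs) (ne_of_gt ht), le_div_iff₀ (by positivity)]
    nlinarith [mul_nonneg (mul_nonneg hc hd) (sq_nonneg (t * a - s * b))]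
  set F : (Fin n × Fin k) × (Fin n × Fin k) → ℝ := fun z =>
    A z.1.1 z.2.1 * S' z.2.1 z.2.2 * B z.2.2 z.1.2 * S z.1.1 z.1.2 ^ 2 / S' z.1.1 z.1.2 with hF
  set G : (Fin n × Fin k) × (Fin n × Fin k) → ℝ := fun z =>
    A z.1.1 z.2.1 * S z.2.1 z.2.2 * B z.2.2 z.1.2 * S z.1.1 z.1.2 with hG
  have hTr : Matrix.trace (Sᵀ * A * S * B) = ∑ z, G z := by
    rw [Matrix.mul_assoc, Matrix.mul_assoc, ← Matrix.mul_assoc A,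
      Matrix.trace_mul_comm]
    simp only [Matrix.trace, Matrix.diag, Matrix.mul_apply, Matrix.transpose_apply,
      Fintype.sum_prod_type, hG, hASB, Finset.sum_mul]
  have hRHS : (∑ i, ∑ p, (A * S' * B) i p * (S i p) ^ 2 / S' i p) = ∑ z, F z := by
    simp only [Fintype.sum_prod_type, hF, hASB, Finset.sum_mul, Finset.sum_div]
  have hswap : ∑ z, F (Prod.swap z) = ∑ z, F z :=
    Fintype.sum_equiv (Equiv.prodComm _ _) _ _ (fun z => rfl)
  have hpt : ∀ z, 2 * G z ≤ F z + F (Prod.swap z) := by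
    intro ⟨⟨i, p⟩, ⟨j, q⟩⟩
    simp only [hF, hG, Prod.swap]
    rw [hA i j, hB q p]
    exact key (A i j) (B q p) (S i p) (S j q) (S' i p) (S' j q)
      (hAnn i j) (hBnn q p) (hSnn i p) (hSnn j q) (hS'pos i p) (hS'pos j q)
  have hsum : 2 * ∑ z, G z ≤ 2 * ∑ z, F z := by
    rw [Finset.mul_sum]
    calc ∑ z, 2 * G z ≤ ∑ z, (F z + F (Prod.swap z)) :=
          Finset.sum_le_sum (fun z _ => hpt z)
      _ = ∑ z, F z + ∑ z, F (Prod.swap z) := Finset.sum_add_distrib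
      _ = 2 * ∑ z, F z := by rw [hswap]; ring
  rw [hTr, hRHS]
  linarith
end

section
/- For any symmetric non-negative matrix B ∈ ℝ^{k×k} and matrices S, S' ∈ ℝ^{n×k} with non-negative entries and S' having strictly positive entries, ∑_{i,p} (B S'ᵀ)_{pi} S_{ip}² / S'_{ip} ≥ tr(S B Sᵀ). -/
open Matrix BigOperators

theorem stmt1 {n k : ℕ} (B : Matrix (Fin k) (Fin k) ℝ)
    (S S' : Matrix (Fin n) (Fin k) ℝ)
    (hBsym : B.IsSymm) (hBnn : ∀ l p, 0 ≤ B l p)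
    (hSnn : ∀ i p, 0 ≤ S i p) (hS'pos : ∀ i p, 0 < S' i p) :
    Matrix.trace (S * B * Sᵀ) ≤ ∑ i, ∑ p, (B * S'ᵀ) p i * (S i p) ^ 2 / S' i p := by
  have key : ∀ (b x y u v : ℝ), 0 ≤ b → 0 ≤ x → 0 ≤ y → 0 < u → 0 < v →
      2 * (x * b * y) ≤ b * v * x ^ 2 / u + b * u * y ^ 2 / v := by
    intro b x y u v hb hx hy hu hv
    rw [div_add_div _ _ hu.ne' hv.ne', le_div_iff₀ (by positivity)]
    nlinarith [mul_nonneg hb (sq_nonneg (v * x - u * y))]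
  have hL : Matrix.trace (S * B * Sᵀ) = ∑ i, ∑ p, ∑ q, S i p * B p q * S i q := by
    simp [Matrix.trace, Matrix.mul_apply, Matrix.diag, Finset.sum_mul]
    exact Finset.sum_congr rfl fun i _ => Finset.sum_comm
  have hR : (∑ i, ∑ p, (B * S'ᵀ) p i * S i p ^ 2 / S' i p)
      = ∑ i, ∑ p, ∑ q, B p q * S' i q * S i p ^ 2 / S' i p := by
    simp [Matrix.mul_apply, Finset.sum_mul, Finset.sum_div]
  rw [hL, hR]
  apply Finset.sum_le_sum
  intro i _
  have hBs : ∀ p q, B q p = B p q := fun p q => by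
    conv_lhs => rw [← hBsym]
    rfl
  have h2 : (2:ℝ) * ∑ p, ∑ q, S i p * B p q * S i q
      ≤ 2 * ∑ p, ∑ q, B p q * S' i q * S i p ^ 2 / S' i p := by
    have swap : (∑ p, ∑ q, B p q * S' i q * S i p ^ 2 / S' i p)
        = ∑ p, ∑ q, B q p * S' i p * S i q ^ 2 / S' i q := by
      rw [Finset.sum_comm]
    calc (2:ℝ) * ∑ p, ∑ q, S i p * B p q * S i q
        = ∑ p, ∑ q, 2 * (S i p * B p q * S i q) := by
          simp [Finset.mul_sum]
      _ ≤ ∑ p, ∑ q, (B p q * S' i q * S i p ^ 2 / S' i p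
            + B q p * S' i p * S i q ^ 2 / S' i q) := by
          apply Finset.sum_le_sum
          intro p _
          apply Finset.sum_le_sum
          intro q _
          rw [hBs p q]
          exact key (B p q) (S i p) (S i q) (S' i p) (S' i q)
            (hBnn p q) (hSnn i p) (hSnn i q) (hS'pos i p) (hS'pos i q)
      _ = (∑ p, ∑ q, B p q * S' i q * S i p ^ 2 / S' i p)
            + ∑ p, ∑ q, B q p * S' i p * S i q ^ 2 / S' i q := by
          rw [← Finset.sum_add_distrib]
          simp [Finset.sum_add_distrib]
      _ = 2 * ∑ p, ∑ q, B p q * S' i q * S i p ^ 2 / S' i p := by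
          rw [← swap]; ring
  linarith
end

section
/- Let U, U' ∈ ℝ^{n×k} be entrywise non-negative with U' entrywise strictly positive, let Λ, P₊ ∈ ℝ^{k×k} be symmetric non-negative, Q₋ ∈ ℝ^{n×k} non-negative, Q₊ ∈ ℝ^{n×k} non-negative, and P₋ ∈ ℝ^{k×k} non-negative symmetric. Define Z(U,U') = tr(−2Q₊Uᵀ − U P₋ Uᵀ) + ∑_{ij} [U'(P₊+Λ)]_{ij} U_{ij}²/U'_{ij} + 2∑_{ij} (Q₋)_{ij}(U_{ij}² + U'_{ij}²)/(2U'_{ij}), and L(U) = tr(−2UᵀQ₊ − UᵀU P₋ + UᵀU(P₊+Λ) + 2UᵀQ₋). Then Z(U,U') ≥ L(U) for all such U, with equality when U = U'. -/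
open Matrix BigOperators

/-- The auxiliary function Z(U, U') of Lemma 3. -/
noncomputable def Zaux {n k : ℕ} (Qp Qm : Matrix (Fin n) (Fin k) ℝ)
    (Lam Pp Pm : Matrix (Fin k) (Fin k) ℝ) (U U' : Matrix (Fin n) (Fin k) ℝ) : ℝ :=
  Matrix.trace (-(2 : ℝ) • (Qp * Uᵀ) - U * Pm * Uᵀ) +
    (∑ i, ∑ j, (U' * (Pp + Lam)) i j * U i j ^ 2 / U' i j) +
    2 * ∑ i, ∑ j, Qm i j * (U i j ^ 2 + U' i j ^ 2) / (2 * U' i j)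

/-- The objective L(U). -/
noncomputable def Lobj {n k : ℕ} (Qp Qm : Matrix (Fin n) (Fin k) ℝ)
    (Lam Pp Pm : Matrix (Fin k) (Fin k) ℝ) (U : Matrix (Fin n) (Fin k) ℝ) : ℝ :=
  Matrix.trace (-(2 : ℝ) • (Uᵀ * Qp) - Uᵀ * U * Pm + Uᵀ * U * (Pp + Lam) + (2 : ℝ) • (Uᵀ * Qm))

/-- Symmetric nonneg quadratic-form inequality. -/
lemma aux_sym_ineq {k : ℕ} (c : Fin k → Fin k → ℝ) (hc : ∀ j l, c j l = c l j)
    (hnn : ∀ j l, 0 ≤ c j l) (b : Fin k → ℝ) :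
    ∑ j, ∑ l, c j l * (b j * b l) ≤ ∑ j, ∑ l, c j l * b j ^ 2 := by
  have hswap : (∑ j, ∑ l, c j l * b l ^ 2) = ∑ j, ∑ l, c j l * b j ^ 2 := by
    rw [Finset.sum_comm]
    exact Finset.sum_congr rfl fun j _ => Finset.sum_congr rfl fun l _ => by rw [hc]
  have hexp : (∑ j, ∑ l, c j l * (b j - b l) ^ 2)
      = (∑ j, ∑ l, c j l * b j ^ 2) + (∑ j, ∑ l, c j l * b l ^ 2)
        - 2 * ∑ j, ∑ l, c j l * (b j * b l) := by
    rw [Finset.mul_sum, ← Finset.sum_add_distrib, ← Finset.sum_sub_distrib]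
    refine Finset.sum_congr rfl fun j _ => ?_
    rw [Finset.mul_sum, ← Finset.sum_add_distrib, ← Finset.sum_sub_distrib]
    exact Finset.sum_congr rfl fun l _ => by ring
  have hpos : 0 ≤ ∑ j, ∑ l, c j l * (b j - b l) ^ 2 :=
    Finset.sum_nonneg fun j _ => Finset.sum_nonneg fun l _ =>
      mul_nonneg (hnn j l) (sq_nonneg _)
  rw [hexp, hswap] at hpos
  linarith

/-- Per-row inequality. -/
lemma aux_row_ineq {k : ℕ} (S : Matrix (Fin k) (Fin k) ℝ) (hS : ∀ a b, S a b = S b a)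
    (hSnn : ∀ a b, 0 ≤ S a b) (u u' : Fin k → ℝ) (hu : ∀ j, 0 ≤ u j)
    (hu' : ∀ j, 0 < u' j) :
    ∑ j, ∑ l, u j * u l * S l j ≤ ∑ j, (∑ l, u' l * S l j) * (u j) ^ 2 / u' j := by
  set b : Fin k → ℝ := fun j => u j / u' j with hb
  set c : Fin k → Fin k → ℝ := fun j l => S l j * u' j * u' l with hcdef
  have hc : ∀ j l, c j l = c l j := fun j l => by simp only [hcdef]; rw [hS]; ring
  have hnn : ∀ j l, 0 ≤ c j l := fun j l =>
    mul_nonneg (mul_nonneg (hSnn l j) (hu' j).le) (hu' l).le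
  have key := aux_sym_ineq c hc hnn b
  have hL : (∑ j, ∑ l, u j * u l * S l j) = ∑ j, ∑ l, c j l * (b j * b l) := by
    refine Finset.sum_congr rfl fun j _ => Finset.sum_congr rfl fun l _ => ?_
    have h1 : u' j ≠ 0 := (hu' j).ne'
    have h2 : u' l ≠ 0 := (hu' l).ne'
    simp only [hcdef, hb]
    field_simp
  have hR : (∑ j, (∑ l, u' l * S l j) * (u j) ^ 2 / u' j)
      = ∑ j, ∑ l, c j l * b j ^ 2 := by
    refine Finset.sum_congr rfl fun j _ => ?_
    rw [Finset.sum_mul, Finset.sum_div]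
    refine Finset.sum_congr rfl fun l _ => ?_
    have h1 : u' j ≠ 0 := (hu' j).ne'
    simp only [hcdef, hb]
    field_simp
  rw [hL, hR]
  exact key

lemma aux_trace_quad {n k : ℕ} (U : Matrix (Fin n) (Fin k) ℝ)
    (S : Matrix (Fin k) (Fin k) ℝ) :
    Matrix.trace (Uᵀ * U * S) = ∑ i, ∑ j, ∑ l, U i j * U i l * S l j := by
  simp [Matrix.trace, Matrix.mul_apply, Matrix.diag, Finset.sum_mul]
  rw [show (∑ x : Fin k, ∑ x_1 : Fin k, ∑ i : Fin n, U i x * U i x_1 * S x_1 x)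
      = ∑ x : Fin k, ∑ i : Fin n, ∑ x_1 : Fin k, U i x * U i x_1 * S x_1 x from
    Finset.sum_congr rfl fun x _ => Finset.sum_comm]
  exact Finset.sum_comm

lemma aux_trace_lin {n k : ℕ} (U Qm : Matrix (Fin n) (Fin k) ℝ) :
    Matrix.trace (Uᵀ * Qm) = ∑ i, ∑ j, Qm i j * U i j := by
  simp [Matrix.trace, Matrix.mul_apply, Matrix.diag]
  rw [Finset.sum_comm]
  simp [mul_comm]

theorem stmt19 {n k : ℕ} (U U' : Matrix (Fin n) (Fin k) ℝ)
    (Qp Qm : Matrix (Fin n) (Fin k) ℝ) (Lam Pp Pm : Matrix (Fin k) (Fin k) ℝ)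
    (hUnn : ∀ i j, 0 ≤ U i j) (hU'pos : ∀ i j, 0 < U' i j)
    (hQpnn : ∀ i j, 0 ≤ Qp i j) (hQmnn : ∀ i j, 0 ≤ Qm i j)
    (hLamsym : Lam.IsSymm) (hLamnn : ∀ i j, 0 ≤ Lam i j)
    (hPpsym : Pp.IsSymm) (hPpnn : ∀ i j, 0 ≤ Pp i j)
    (hPmsym : Pm.IsSymm) (hPmnn : ∀ i j, 0 ≤ Pm i j) :
    Lobj Qp Qm Lam Pp Pm U ≤ Zaux Qp Qm Lam Pp Pm U U' ∧
      (U = U' → Zaux Qp Qm Lam Pp Pm U U' = Lobj Qp Qm Lam Pp Pm U) := by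
  set S := Pp + Lam with hSdef
  have hSsym : ∀ a b, S a b = S b a := by
    intro a b
    have h1 : Pp b a = Pp a b := by
      have := hPpsym; rw [Matrix.IsSymm] at this
      calc Pp b a = Ppᵀ a b := rfl
        _ = Pp a b := by rw [this]
    have h2 : Lam b a = Lam a b := by
      have := hLamsym; rw [Matrix.IsSymm] at this
      calc Lam b a = Lamᵀ a b := rfl
        _ = Lam a b := by rw [this]
    simp [hSdef, Matrix.add_apply, h1, h2]
  have hSnn : ∀ a b, 0 ≤ S a b := fun a b =>
    add_nonneg (hPpnn a b) (hLamnn a b)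
  -- trace decompositions
  have hZtr : Matrix.trace (-(2 : ℝ) • (Qp * Uᵀ) - U * Pm * Uᵀ)
      = -(2 : ℝ) * Matrix.trace (Uᵀ * Qp) - Matrix.trace (Uᵀ * U * Pm) := by
    rw [Matrix.trace_sub, Matrix.trace_smul, Matrix.trace_mul_comm Qp Uᵀ,
      Matrix.trace_mul_comm (U * Pm) Uᵀ, ← Matrix.mul_assoc]
    simp
  have hLtr : Lobj Qp Qm Lam Pp Pm U
      = -(2 : ℝ) * Matrix.trace (Uᵀ * Qp) - Matrix.trace (Uᵀ * U * Pm)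
        + Matrix.trace (Uᵀ * U * S) + 2 * Matrix.trace (Uᵀ * Qm) := by
    rw [Lobj]
    rw [Matrix.trace_add, Matrix.trace_add, Matrix.trace_sub, Matrix.trace_smul,
      Matrix.trace_smul]
    simp [hSdef]
  -- the quadratic inequality
  have hA : Matrix.trace (Uᵀ * U * S) ≤ ∑ i, ∑ j, (U' * S) i j * U i j ^ 2 / U' i j := by
    rw [aux_trace_quad]
    apply Finset.sum_le_sum
    intro i _
    have := aux_row_ineq S hSsym hSnn (fun j => U i j) (fun j => U' i j)
      (fun j => hUnn i j) (fun j => hU'pos i j)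
    refine le_trans this (le_of_eq ?_)
    refine Finset.sum_congr rfl fun j _ => ?_
    rw [Matrix.mul_apply]
  -- the linear inequality
  have hB : 2 * Matrix.trace (Uᵀ * Qm)
      ≤ 2 * ∑ i, ∑ j, Qm i j * (U i j ^ 2 + U' i j ^ 2) / (2 * U' i j) := by
    rw [aux_trace_lin]
    have h2 : (∑ i, ∑ j, Qm i j * U i j)
        ≤ ∑ i, ∑ j, Qm i j * (U i j ^ 2 + U' i j ^ 2) / (2 * U' i j) := by
      refine Finset.sum_le_sum fun i _ => Finset.sum_le_sum fun j _ => ?_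
      rw [mul_div_assoc]
      refine mul_le_mul_of_nonneg_left ?_ (hQmnn i j)
      rw [le_div_iff₀ (by have := hU'pos i j; linarith)]
      nlinarith [sq_nonneg (U i j - U' i j), (hU'pos i j)]
    linarith
  constructor
  · rw [hLtr, Zaux, hZtr, ← hSdef]
    linarith
  · intro hUU'
    subst hUU'
    rw [hLtr, Zaux, hZtr, ← hSdef]
    have hAeq : (∑ i, ∑ j, (U * S) i j * U i j ^ 2 / U i j)
        = Matrix.trace (Uᵀ * U * S) := by
      rw [aux_trace_quad]
      refine Finset.sum_congr rfl fun i _ => Finset.sum_congr rfl fun j _ => ?_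
      rw [Matrix.mul_apply, Finset.sum_mul, Finset.sum_div]
      refine Finset.sum_congr rfl fun l _ => ?_
      have hne : U i j ≠ 0 := (hU'pos i j).ne'
      field_simp
    have hBeq : (∑ i, ∑ j, Qm i j * (U i j ^ 2 + U i j ^ 2) / (2 * U i j))
        = Matrix.trace (Uᵀ * Qm) := by
      rw [aux_trace_lin]
      refine Finset.sum_congr rfl fun i _ => Finset.sum_congr rfl fun j _ => ?_
      have hne : U i j ≠ 0 := (hU'pos i j).ne'
      field_simp
      ring
    rw [hAeq, hBeq]
end
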